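/- arXiv:2406.04798 — 4 statements merged into one kernel-verified Lean document; each statement's English description precedes it below -/
import Mathlib

section
/- Fix real numbers t̂, ẑ, â, b̂ with e := â t̂ + b̂ − ẑ ≠ 0 (the non-incidence condition). For t ≠ t̂ define z(t) = â t + b̂ and a(t) = (z(t) − ẑ)/(t − t̂). Then along this curve: z''(t) = 0, z'(t) − a(t) = −e/(t − t̂) ≠ 0, and a''(t) = −2 (a'(t))² / (z'(t) − a(t)). That is, the Lewy curve of the flat para-CR 3-manifold determined by the non-incident pair ((t̂, ẑ), (â, b̂)) solves the ODE pair z'' = 0, a'' = −2(a')²/(z' − a). -/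
/-- The Lewy curve of the flat para-CR 3-manifold determined by the non-incident
pair `((t̂, ẑ), (â, b̂))`: `z t = â t + b̂`. Here `ah = â`, `bh = b̂`. -/
def zCurve (ah bh : ℝ) : ℝ → ℝ := fun s => ah * s + bh

/-- The second component `a t = (z t − ẑ)/(t − t̂)` of the Lewy curve. -/
noncomputable def aCurve (th zh ah bh : ℝ) : ℝ → ℝ := fun s => (zCurve ah bh s - zh) / (s - th)

/-!
Off `t = t̂` the second component is a translated hyperbola, `a t = â + e / (t − t̂)`, so
`z' − a = −e/(t − t̂)`, `a' = −e/(t − t̂)²` and `a'' = 2e/(t − t̂)³`, which is exactly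
`−2 (a')² / (z' − a)`.
-/

open Filter Topology

lemma deriv_zCurve (ah bh : ℝ) : deriv (zCurve ah bh) = fun _ => ah := by
  funext s
  exact (((hasDerivAt_id s).const_mul ah).add_const bh).deriv.trans (mul_one ah)

section Hyperbola

variable {c e th s : ℝ}

lemma hasDerivAt_const_add_div_sub (hs : s ≠ th) :
    HasDerivAt (fun x => c + e / (x - th)) (-e / (s - th) ^ 2) s := by
  have hne : s - th ≠ 0 := sub_ne_zero.mpr hs
  have h : HasDerivAt (fun x => c + e * (x - th)⁻¹) (e * (-1 / (s - th) ^ 2)) s :=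
    ((((hasDerivAt_id s).sub_const th).inv hne).const_mul e).const_add c
  simp only [← div_eq_mul_inv] at h
  exact h.congr_deriv (by ring)

lemma hasDerivAt_neg_div_sub_sq (hs : s ≠ th) :
    HasDerivAt (fun x => -e / (x - th) ^ 2) (2 * e / (s - th) ^ 3) s := by
  have hne : s - th ≠ 0 := sub_ne_zero.mpr hs
  have hsq : HasDerivAt (fun x => (x - th) ^ 2) (2 * (s - th)) s := by
    simpa using ((hasDerivAt_id s).sub_const th).fun_pow 2
  have h : HasDerivAt (fun x => -e * ((x - th) ^ 2)⁻¹)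
      (-e * (-(2 * (s - th)) / ((s - th) ^ 2) ^ 2)) s :=
    (hsq.inv (pow_ne_zero 2 hne)).const_mul (-e)
  simp only [← div_eq_mul_inv] at h
  exact h.congr_deriv (by field_simp)

end Hyperbola

section LewyCurve

variable {th zh ah bh : ℝ}

lemma aCurve_eq_add_div (s : ℝ) (hs : s ≠ th) :
    aCurve th zh ah bh s = ah + (ah * th + bh - zh) / (s - th) := by
  have hne : s - th ≠ 0 := sub_ne_zero.mpr hs
  simp only [aCurve, zCurve]
  field_simp
  ring

lemma aCurve_eventuallyEq_add_div {t : ℝ} (ht : t ≠ th) :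
    aCurve th zh ah bh =ᶠ[𝓝 t] fun s => ah + (ah * th + bh - zh) / (s - th) := by
  filter_upwards [eventually_ne_nhds ht] with s hs
  exact aCurve_eq_add_div s hs

lemma deriv_aCurve {s : ℝ} (hs : s ≠ th) :
    deriv (aCurve th zh ah bh) s = -(ah * th + bh - zh) / (s - th) ^ 2 :=
  (hasDerivAt_const_add_div_sub hs).congr_of_eventuallyEq
    (aCurve_eventuallyEq_add_div hs) |>.deriv

lemma deriv_deriv_aCurve {t : ℝ} (ht : t ≠ th) :
    deriv (deriv (aCurve th zh ah bh)) t = 2 * (ah * th + bh - zh) / (t - th) ^ 3 := by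
  have h : deriv (aCurve th zh ah bh) =ᶠ[𝓝 t] fun s => -(ah * th + bh - zh) / (s - th) ^ 2 := by
    filter_upwards [eventually_ne_nhds ht] with s hs
    exact deriv_aCurve hs
  exact ((hasDerivAt_neg_div_sub_sq ht).congr_of_eventuallyEq h).deriv

lemma deriv_zCurve_sub_aCurve {t : ℝ} (ht : t ≠ th) :
    deriv (zCurve ah bh) t - aCurve th zh ah bh t = -(ah * th + bh - zh) / (t - th) := by
  rw [deriv_zCurve, aCurve_eq_add_div t ht]
  ring

end LewyCurve

/-- The Lewy curve of the flat para-CR 3-manifold determined by a non-incident pair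
solves the ODE pair `z'' = 0`, `a'' = −2(a')²/(z' − a)`; moreover
`z'(t) − a(t) = −e/(t − t̂) ≠ 0` where `e = â t̂ + b̂ − ẑ ≠ 0`. -/
theorem stmt4 (th zh ah bh : ℝ) (he : ah * th + bh - zh ≠ 0) :
    ∀ t : ℝ, t ≠ th →
      deriv (deriv (zCurve ah bh)) t = 0 ∧
      deriv (zCurve ah bh) t - aCurve th zh ah bh t = -(ah * th + bh - zh) / (t - th) ∧
      deriv (zCurve ah bh) t - aCurve th zh ah bh t ≠ 0 ∧
      deriv (deriv (aCurve th zh ah bh)) t =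
        -2 * (deriv (aCurve th zh ah bh) t) ^ 2 /
          (deriv (zCurve ah bh) t - aCurve th zh ah bh t) := by
  intro t ht
  have hne : t - th ≠ 0 := sub_ne_zero.mpr ht
  have hdiff := deriv_zCurve_sub_aCurve (zh := zh) (ah := ah) (bh := bh) ht
  refine ⟨by simp [deriv_zCurve], hdiff, ?_, ?_⟩
  · rw [hdiff]
    exact div_ne_zero (neg_ne_zero.mpr he) hne
  · rw [deriv_deriv_aCurve ht, deriv_aCurve ht, hdiff]
    field_simp
end

section
/- Let t, a : I → ℝⁿ be twice differentiable vector-valued functions on an interval I and let Z ∈ ℝⁿ be a constant vector. Suppose t'' = 0, and that for all s ∈ I: a'(s) = Z·(1 − a'(s)·t(s) − a(s)·t'(s)) (a vector equation, with the scalar 1 − a'·t − a·t' multiplying Z) and a''(s) = −Z·(a''(s)·t(s) + 2 a'(s)·t'(s)). If additionally 1 − a'(s)·t(s) − a(s)·t'(s) ≠ 0, then (1 − a(s)·t'(s)) a''(s) = −2 (a'(s)·t'(s)) a'(s) for all s ∈ I. In particular, any curve defined implicitly by a = Z(z − a·t) + T with t = Az + B affine (A, B, Z, T constant vectors) satisfies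 the ODE system t'' = 0, a'' = (−2 a'·t' / (1 − a·t')) a'. -/
open scoped RealInnerProductSpace

/-!
Both `a'` and `a''` are multiples of `Z`, say `a' = α Z` and `a'' = -β Z`. Pairing these with `t`
and substituting into the defining relations gives `1 - a·t' = α (1 + Z·t)` and
`β (1 + Z·t) = 2 a'·t'`, so `(1 - a·t') a'' = -α β (1 + Z·t) Z = -2 (a'·t') a'`: this is the
elimination of `Z`, and it happens pointwise.
-/

section

variable {E : Type*} [NormedAddCommGroup E] [InnerProductSpace ℝ E]

theorem smul_eq_smul_of_eq_inner_smul {a a' a'' t t' Z : E}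
    (h1 : a' = (1 - ⟪a', t⟫ - ⟪a, t'⟫) • Z)
    (h2 : a'' = -(⟪a'', t⟫ + 2 * ⟪a', t'⟫) • Z) :
    (1 - ⟪a, t'⟫) • a'' = (-2 * ⟪a', t'⟫) • a' := by
  set α := 1 - ⟪a', t⟫ - ⟪a, t'⟫ with hα
  set β := ⟪a'', t⟫ + 2 * ⟪a', t'⟫ with hβ
  have hα_mul : 1 - ⟪a, t'⟫ = α * (1 + ⟪Z, t⟫) := by
    have : ⟪a', t⟫ = α * ⟪Z, t⟫ := by rw [h1, real_inner_smul_left]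
    linarith
  have hβ_mul : β * (1 + ⟪Z, t⟫) = 2 * ⟪a', t'⟫ := by
    have : ⟪a'', t⟫ = -β * ⟪Z, t⟫ := by rw [h2, real_inner_smul_left]
    linarith
  calc (1 - ⟪a, t'⟫) • a'' = (α * (1 + ⟪Z, t⟫) * -β) • Z := by rw [hα_mul, h2, smul_smul]
    _ = (-(β * (1 + ⟪Z, t⟫)) * α) • Z := by ring_nf
    _ = (-2 * ⟪a', t'⟫) • a' := by rw [hβ_mul, h1, smul_smul]; ring_nf

end

theorem stmt6_general (n : ℕ) (I : Set ℝ)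
    (t a : ℝ → EuclideanSpace ℝ (Fin n)) (Z : EuclideanSpace ℝ (Fin n))
    (h1 : ∀ s ∈ I, deriv a s =
      (1 - ⟪deriv a s, t s⟫ - ⟪a s, deriv t s⟫) • Z)
    (h2 : ∀ s ∈ I, deriv (deriv a) s =
      -(⟪deriv (deriv a) s, t s⟫ + 2 * ⟪deriv a s, deriv t s⟫) • Z) :
    ∀ s ∈ I, (1 - ⟪a s, deriv t s⟫) • deriv (deriv a) s =
      (-2 * ⟪deriv a s, deriv t s⟫) • deriv a s :=
  fun s hs => smul_eq_smul_of_eq_inner_smul (h1 s hs) (h2 s hs)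

/-- For vector-valued curves `t, a : I → ℝⁿ` with `t'' = 0`,
`a' = (1 − a'·t − a·t') Z` and `a'' = −(a''·t + 2 a'·t') Z`, with
`1 − a'·t − a·t' ≠ 0`, one has `(1 − a·t') a'' = −2 (a'·t') a'`
(the ODE system for Lewy curves of the flat para-CR structure). -/
theorem stmt6 (n : ℕ) (I : Set ℝ) (hI : IsOpen I)
    (t a : ℝ → EuclideanSpace ℝ (Fin n)) (Z : EuclideanSpace ℝ (Fin n))
    (htt : ∀ s ∈ I, deriv (deriv t) s = 0)
    (h1 : ∀ s ∈ I, deriv a s =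
      (1 - ⟪deriv a s, t s⟫ - ⟪a s, deriv t s⟫) • Z)
    (h2 : ∀ s ∈ I, deriv (deriv a) s =
      -(⟪deriv (deriv a) s, t s⟫ + 2 * ⟪deriv a s, deriv t s⟫) • Z)
    (hne : ∀ s ∈ I, 1 - ⟪deriv a s, t s⟫ - ⟪a s, deriv t s⟫ ≠ 0) :
    ∀ s ∈ I, (1 - ⟪a s, deriv t s⟫) • deriv (deriv a) s =
      (-2 * ⟪deriv a s, deriv t s⟫) • deriv a s :=
  stmt6_general n I t a Z h1 h2
end

section
/- Consider the system of two second-order ODEs with independent variable z and dependent variables (y¹, y²) = (t, a): (y¹)'' = F¹ = 0 and (y²)'' = F² = −2 p¹ (p²)² / (1 − y² p¹), where pⁱ = (yⁱ)'. Define the total derivative vector field X = ∂_z + p¹∂_{y¹} + p²∂_{y²} + F²∂_{p²}, and the matrix F^i_j = −∂F^i/∂y^j + (1/2) X(∂F^i/∂p^j) − (1/4) (∂F^i/∂p^k)(∂F^k/∂p^j) (sum over k). Then F^i_j = 0 identically (on the open set 1 − y²p¹ ≠ 0); in particular the generalized Wilczyński (Fels) torsion T^i_j = F^i_j − (1/2)δ^i_j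 F^k_k of this path geometry vanishes. -/
/-- The right-hand sides of the ODE system `(y¹)'' = 0`,
`(y²)'' = −2 p¹ (p²)²/(1 − y² p¹)`, on phase space with coordinates
`s = (z, y¹, y², p¹, p²)` (indices `0,…,4`). -/
noncomputable def Fsys : Fin 2 → (Fin 5 → ℝ) → ℝ :=
  ![fun _ => 0, fun s => -2 * s 3 * (s 4) ^ 2 / (1 - s 2 * s 3)]

/-- The total derivative vector field `X = ∂_z + p¹∂_{y¹} + p²∂_{y²} + F²∂_{p²}`
acting on a function. -/
noncomputable def Xtot (g : (Fin 5 → ℝ) → ℝ) (s : Fin 5 → ℝ) : ℝ :=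
  fderiv ℝ g s ![1, s 3, s 4, 0, Fsys 1 s]

/-- Indices of the `y` coordinates. -/
def eY : Fin 2 → Fin 5 := ![1, 2]

/-- Indices of the `p` coordinates. -/
def eP : Fin 2 → Fin 5 := ![3, 4]

/-- `F^i_j = −∂F^i/∂y^j + (1/2) X(∂F^i/∂p^j) − (1/4)(∂F^i/∂p^k)(∂F^k/∂p^j)`. -/
noncomputable def Fmat (i j : Fin 2) (s : Fin 5 → ℝ) : ℝ :=
  -(fderiv ℝ (Fsys i) s (Pi.single (eY j) 1))
    + (1 / 2) * Xtot (fun u => fderiv ℝ (Fsys i) u (Pi.single (eP j) 1)) s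
    - (1 / 4) * ∑ k : Fin 2,
        (fderiv ℝ (Fsys i) s (Pi.single (eP k) 1)) *
          (fderiv ℝ (Fsys k) s (Pi.single (eP j) 1))

/-! With `D = 1 - y²p¹` the only nonzero derivatives entering `F^i_j` are
`∂F²/∂y² = -2(p¹p²)²/D²`, `∂F²/∂p¹ = -2(p²)²/D²`, `∂F²/∂p² = -4p¹p²/D`, and along `X`
`X(∂F²/∂p¹) = 4p¹(p²)³/D³`, `X(∂F²/∂p²) = 4(p¹p²)²/D²`. Hence
`F²₁ = 2p¹(p²)³/D³ - ¼·8p¹(p²)³/D³ = 0` and `F²₂ = 2(p¹p²)²/D² + 2(p¹p²)²/D² - ¼·16(p¹p²)²/D² = 0`,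
while the first row vanishes because `F¹ = 0`. -/

open Topology

theorem HasFDerivAt.div {𝕜 E : Type*} [NontriviallyNormedField 𝕜] [NormedAddCommGroup E]
    [NormedSpace 𝕜 E] {c d : E → 𝕜} {c' d' : E →L[𝕜] 𝕜} {x : E}
    (hc : HasFDerivAt c c' x) (hd : HasFDerivAt d d' x) (hx : d x ≠ 0) :
    HasFDerivAt (fun y => c y / d y) ((d x ^ 2)⁻¹ • (d x • c' - c x • d')) x := by
  simp only [div_eq_mul_inv]
  refine (hc.fun_mul ((hasDerivAt_inv hx).comp_hasFDerivAt x hd)).congr_fderiv ?_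
  ext v
  simp only [Function.comp_apply, add_apply, smul_apply,
    sub_apply, smul_eq_mul]
  field_simp
  ring

theorem fderiv_div_apply {𝕜 E : Type*} [NontriviallyNormedField 𝕜] [NormedAddCommGroup E]
    [NormedSpace 𝕜 E] {c d : E → 𝕜} {x : E} (hc : DifferentiableAt 𝕜 c x)
    (hd : DifferentiableAt 𝕜 d x) (hx : d x ≠ 0) (v : E) :
    fderiv 𝕜 (fun y => c y / d y) x v =
      (d x * fderiv 𝕜 c x v - c x * fderiv 𝕜 d x v) / d x ^ 2 := by
  rw [(hc.hasFDerivAt.div hd.hasFDerivAt hx).fderiv]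
  simp only [smul_apply, sub_apply, smul_eq_mul]
  field_simp

@[simp]
theorem fderiv_eval_apply {𝕜 ι : Type*} [NontriviallyNormedField 𝕜] [Fintype ι] (i : ι)
    (x v : ι → 𝕜) : fderiv 𝕜 (fun u : ι → 𝕜 => u i) x v = v i := by
  simp only [(hasFDerivAt_apply i x).fderiv, ContinuousLinearMap.proj_apply]

section Chains

variable {s : Fin 5 → ℝ}

theorem eventually_denom_ne_zero (hs : 1 - s 2 * s 3 ≠ 0) :
    ∀ᶠ u in 𝓝 s, 1 - u 2 * u 3 ≠ 0 :=
  (by fun_prop : Continuous fun u : Fin 5 → ℝ => 1 - u 2 * u 3).continuousAt.eventually_ne hs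

theorem fderiv_Fsys_zero (v : Fin 5 → ℝ) : fderiv ℝ (Fsys 0) s v = 0 := by
  simp [Fsys]

theorem fderiv_Fsys_one (hs : 1 - s 2 * s 3 ≠ 0) (v : Fin 5 → ℝ) :
    fderiv ℝ (Fsys 1) s v =
      -2 * s 4 ^ 2 * (s 3 ^ 2 * v 2 + v 3) / (1 - s 2 * s 3) ^ 2
        - 4 * s 3 * s 4 * v 4 / (1 - s 2 * s 3) := by
  change fderiv ℝ (fun u => -2 * u 3 * u 4 ^ 2 / (1 - u 2 * u 3)) s v = _
  rw [fderiv_div_apply (d := fun u : Fin 5 → ℝ => 1 - u 2 * u 3) (by fun_prop) (by fun_prop) hs]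
  simp (disch := fun_prop) [fderiv_fun_mul, fderiv_fun_pow, fderiv_fun_sub]
  field_simp
  ring

theorem Xtot_fderiv_Fsys_one_p1 (hs : 1 - s 2 * s 3 ≠ 0) :
    Xtot (fun u => fderiv ℝ (Fsys 1) u (Pi.single 3 1)) s =
      4 * s 3 * s 4 ^ 3 / (1 - s 2 * s 3) ^ 3 := by
  have hloc : (fun u => fderiv ℝ (Fsys 1) u (Pi.single 3 1))
      =ᶠ[𝓝 s] fun u => -2 * u 4 ^ 2 / (1 - u 2 * u 3) ^ 2 := by
    filter_upwards [eventually_denom_ne_zero hs] with u hu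
    simp [fderiv_Fsys_one hu]
  rw [Xtot, hloc.fderiv_eq, fderiv_div_apply (d := fun u : Fin 5 → ℝ => (1 - u 2 * u 3) ^ 2)
    (by fun_prop) (by fun_prop) (pow_ne_zero 2 hs)]
  simp (disch := fun_prop) [fderiv_fun_mul, fderiv_fun_pow, fderiv_fun_sub, Fsys]
  field_simp
  ring

theorem Xtot_fderiv_Fsys_one_p2 (hs : 1 - s 2 * s 3 ≠ 0) :
    Xtot (fun u => fderiv ℝ (Fsys 1) u (Pi.single 4 1)) s =
      4 * s 3 ^ 2 * s 4 ^ 2 / (1 - s 2 * s 3) ^ 2 := by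
  have hloc : (fun u => fderiv ℝ (Fsys 1) u (Pi.single 4 1))
      =ᶠ[𝓝 s] fun u => -4 * u 3 * u 4 / (1 - u 2 * u 3) := by
    filter_upwards [eventually_denom_ne_zero hs] with u hu
    simp [fderiv_Fsys_one hu, neg_div]
  rw [Xtot, hloc.fderiv_eq,
    fderiv_div_apply (d := fun u : Fin 5 → ℝ => 1 - u 2 * u 3) (by fun_prop) (by fun_prop) hs]
  simp (disch := fun_prop) [fderiv_fun_mul, fderiv_fun_sub, Fsys]
  field_simp
  ring

theorem Fmat_zero_left (j : Fin 2) : Fmat 0 j s = 0 := by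
  simp [Fmat, Xtot, fderiv_Fsys_zero]

theorem Fmat_one_zero (hs : 1 - s 2 * s 3 ≠ 0) : Fmat 1 0 s = 0 := by
  simp [Fmat, eY, eP, Xtot_fderiv_Fsys_one_p1 hs, fderiv_Fsys_one hs, fderiv_Fsys_zero]
  field_simp
  ring

theorem Fmat_one_one (hs : 1 - s 2 * s 3 ≠ 0) : Fmat 1 1 s = 0 := by
  simp [Fmat, eY, eP, Xtot_fderiv_Fsys_one_p2 hs, fderiv_Fsys_one hs, fderiv_Fsys_zero]
  field_simp
  ring

theorem Fmat_eq_zero (hs : 1 - s 2 * s 3 ≠ 0) (i j : Fin 2) : Fmat i j s = 0 := by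
  fin_cases i <;> fin_cases j
  exacts [Fmat_zero_left 0, Fmat_zero_left 1, Fmat_one_zero hs, Fmat_one_one hs]

end Chains

/-- For the system describing chains (Lewy curves) of the flat para-CR 3-manifold,
`F^i_j = 0` on the open set `1 − y²p¹ ≠ 0`; in particular the Fels torsion
`T^i_j = F^i_j − (1/2)δ^i_j F^k_k` vanishes. -/
theorem stmt7 : ∀ s : Fin 5 → ℝ, 1 - s 2 * s 3 ≠ 0 →
    (∀ i j : Fin 2, Fmat i j s = 0) ∧
    (∀ i j : Fin 2, Fmat i j s
      - (1 / 2) * (if i = j then (1:ℝ) else 0) * ∑ k : Fin 2, Fmat k k s = 0) := by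
  intro s hs
  refine ⟨Fmat_eq_zero hs, fun i j => ?_⟩
  simp [Fmat_eq_zero hs]
end

section
/- Fix real constants Z ≠ 0 and T. Let t(z) = Az + B be affine (A, B ∈ ℝ, A ≠ 0), and suppose a : I → ℝ is a differentiable function satisfying the implicit relation a(z) = Z·(z − a(z)·t(z)) + T on an interval I on which 1 + Z·t(z) ≠ 0. Then a is twice differentiable, a'(z) = Z(1 − a(z)A)/(1 + Z t(z)), and a satisfies the second-order ODE (1 − a(z) t'(z)) a''(z) = −2 (a'(z) t'(z)) a'(z), i.e., a'' = −2Aa'·a'/(1 − Aa) wherever 1 − A a(z) ≠ 0. -/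
/-!
Solving the implicit relation, which is linear in `a z`, shows that `a` is the Möbius function
`(Z z + T₀) / (1 + Z t(z))` on `I`. A Möbius function `(p z + q) / (r z + s)` has derivative
`(p s - q r) / (r z + s)²`, hence satisfies `a'' = -2 r a' / (r z + s)`; with `r = Z A` and
`Z / (1 + Z t) = a' / (1 - A a)` (the first-order formula) this is the Lewy-curve equation.
-/

open Filter

theorem hasDerivAt_affine_div_affine {p q r s x : ℝ} (hx : r * x + s ≠ 0) :
    HasDerivAt (fun y => (p * y + q) / (r * y + s)) ((p * s - q * r) / (r * x + s) ^ 2) x := by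
  have hnum : HasDerivAt (fun y => p * y + q) p x := by
    simpa using ((hasDerivAt_id x).const_mul p).add_const q
  have hden : HasDerivAt (fun y => r * y + s) r x := by
    simpa using ((hasDerivAt_id x).const_mul r).add_const s
  exact (hnum.fun_div hden hx).congr_deriv (by ring)

theorem hasDerivAt_const_div_affine_sq {c r s x : ℝ} (hx : r * x + s ≠ 0) :
    HasDerivAt (fun y => c / (r * y + s) ^ 2) (-2 * r * (c / (r * x + s) ^ 2) / (r * x + s)) x := by
  have hden : HasDerivAt (fun y => (r * y + s) ^ 2) (2 * (r * x + s) * r) x := by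
    simpa using (((hasDerivAt_id x).const_mul r).add_const s).fun_pow 2
  refine ((hasDerivAt_const x c).fun_div hden (pow_ne_zero 2 hx)).congr_deriv ?_
  field_simp
  ring

section AffineDivAffine

variable {a : ℝ → ℝ} {p q r s : ℝ} {I : Set ℝ}

theorem hasDerivAt_of_eqOn_affine_div_affine (hI : IsOpen I)
    (ha : ∀ x ∈ I, a x = (p * x + q) / (r * x + s)) (hd : ∀ x ∈ I, r * x + s ≠ 0)
    {x : ℝ} (hx : x ∈ I) : HasDerivAt a ((p * s - q * r) / (r * x + s) ^ 2) x :=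
  (hasDerivAt_affine_div_affine (hd x hx)).congr_of_eventuallyEq
    (eventually_of_mem (hI.mem_nhds hx) ha)

theorem hasDerivAt_deriv_of_eqOn_affine_div_affine (hI : IsOpen I)
    (ha : ∀ x ∈ I, a x = (p * x + q) / (r * x + s)) (hd : ∀ x ∈ I, r * x + s ≠ 0)
    {x : ℝ} (hx : x ∈ I) : HasDerivAt (deriv a) (-2 * r * deriv a x / (r * x + s)) x := by
  have hderiv : ∀ y ∈ I, deriv a y = (p * s - q * r) / (r * y + s) ^ 2 := fun y hy =>
    (hasDerivAt_of_eqOn_affine_div_affine hI ha hd hy).deriv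
  rw [hderiv x hx]
  exact (hasDerivAt_const_div_affine_sq (hd x hx)).congr_of_eventuallyEq
    (eventually_of_mem (hI.mem_nhds hx) hderiv)

end AffineDivAffine

theorem stmt15_general (Z T₀ A B : ℝ)
    (I : Set ℝ) (hI : IsOpen I) (a : ℝ → ℝ)
    (hrel : ∀ z ∈ I, a z = Z * (z - a z * (A * z + B)) + T₀)
    (hden : ∀ z ∈ I, 1 + Z * (A * z + B) ≠ 0) :
    ∀ z ∈ I,
      DifferentiableAt ℝ a z ∧ DifferentiableAt ℝ (deriv a) z ∧
      deriv a z = Z * (1 - a z * A) / (1 + Z * (A * z + B)) ∧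
      (1 - A * a z ≠ 0 →
        deriv (deriv a) z = -2 * A * deriv a z * deriv a z / (1 - A * a z)) := by
  have hd : ∀ z ∈ I, Z * A * z + (1 + Z * B) ≠ 0 := fun z hz => by
    convert hden z hz using 1; ring
  have ha : ∀ z ∈ I, a z = (Z * z + T₀) / (Z * A * z + (1 + Z * B)) := fun z hz => by
    rw [eq_div_iff (hd z hz)]
    linear_combination hrel z hz
  intro z hz
  have hda := hasDerivAt_of_eqOn_affine_div_affine hI ha hd hz
  have hdda := hasDerivAt_deriv_of_eqOn_affine_div_affine hI ha hd hz
  have hfirst : deriv a z = Z * (1 - a z * A) / (1 + Z * (A * z + B)) := by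
    rw [hda.deriv, ha z hz]
    field_simp [hd z hz, hden z hz]
    ring
  refine ⟨hda.differentiableAt, hdda.differentiableAt, hfirst, fun hne => ?_⟩
  have hratio : Z / (Z * A * z + (1 + Z * B)) = deriv a z / (1 - A * a z) := by
    rw [hfirst, eq_div_iff hne]
    field_simp [hd z hz, hden z hz]
    ring
  calc deriv (deriv a) z = -2 * A * deriv a z * (Z / (Z * A * z + (1 + Z * B))) := by
        rw [hdda.deriv]; ring
    _ = -2 * A * deriv a z * deriv a z / (1 - A * a z) := by
        rw [hratio]; ring

/-- The `n = 1` derivation of the Lewy-curve ODE for the flat para-CR structure: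
if `t z = A z + B` is affine (`A ≠ 0`) and `a` is differentiable on an open set `I`
satisfying `a = Z (z − a t) + T₀` with `1 + Z t ≠ 0` on `I` (`Z ≠ 0`), then `a` is
twice differentiable on `I`, `a' = Z(1 − a A)/(1 + Z t)`, and
`a'' = −2 A a' a'/(1 − A a)` wherever `1 − A a ≠ 0`. -/
theorem stmt15 (Z T₀ A B : ℝ) (hZ : Z ≠ 0) (hA : A ≠ 0)
    (I : Set ℝ) (hI : IsOpen I) (a : ℝ → ℝ)
    (ha : ∀ z ∈ I, DifferentiableAt ℝ a z)
    (hrel : ∀ z ∈ I, a z = Z * (z - a z * (A * z + B)) + T₀)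
    (hden : ∀ z ∈ I, 1 + Z * (A * z + B) ≠ 0) :
    ∀ z ∈ I,
      DifferentiableAt ℝ a z ∧ DifferentiableAt ℝ (deriv a) z ∧
      deriv a z = Z * (1 - a z * A) / (1 + Z * (A * z + B)) ∧
      (1 - A * a z ≠ 0 →
        deriv (deriv a) z = -2 * A * deriv a z * deriv a z / (1 - A * a z)) :=
  stmt15_general Z T₀ A B I hI a hrel hden
end
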